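/- arXiv:2204.05964 — 2 statements merged into one kernel-verified Lean document; each statement's English description precedes it below -/
import Mathlib

section
/- Let f : ℝ → ℝ be the sinc function, f(t) = sin(πt)/(πt) for t ≠ 0 and f(0) = 1, for n ∈ ℤ^d let φ̂_n(x) = ∏_{j=1}^d f(n_j + x_j), and for R > 0 and ν ∈ ℤ set m(R,ν) = 1 if |ν| ≤ 2R and m(R,ν) = ν^{-2} if |ν| > 2R. Then for every multiindex α ∈ ℕ^d there exists a constant C = C(α,d) > 0 such that ∫_{B_R} |∂^α φ̂_n(x)|² dx ≤ C R^d ∏_{j=1}^d m(R, n_j) for all R > 0 and all n ∈ ℤ^d. -/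
open scoped BigOperators

/-- The sinc function: `f(t) = sin(πt)/(πt)` for `t ≠ 0` and `f(0) = 1`. -/
noncomputable def sinc (t : ℝ) : ℝ :=
  if t = 0 then 1 else Real.sin (Real.pi * t) / (Real.pi * t)

/-- `φ̂_n(x) = ∏_{j=1}^d f(n_j + x_j)` where `f` is the sinc function. -/
noncomputable def phihat {d : ℕ} (n : Fin d → ℤ) (x : Fin d → ℝ) : ℝ :=
  ∏ j, sinc ((n j : ℝ) + x j)

/-- Partial derivative in the `j`-th coordinate direction. -/
noncomputable def coordDeriv {d : ℕ} {E : Type*} [NormedAddCommGroup E] [NormedSpace ℝ E]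
    (j : Fin d) (g : (Fin d → ℝ) → E) : (Fin d → ℝ) → E :=
  fun x => fderiv ℝ g x (Pi.single j 1)

/-- The multiindex partial derivative `∂^α = ∂^{α_1}_{x_1} ⋯ ∂^{α_d}_{x_d}`. -/
noncomputable def multiDeriv {d : ℕ} {E : Type*} [NormedAddCommGroup E] [NormedSpace ℝ E]
    (α : Fin d → ℕ) (g : (Fin d → ℝ) → E) : (Fin d → ℝ) → E :=
  (List.finRange d).foldr (fun j h => (coordDeriv j)^[α j] h) g

open MeasureTheory
open scoped ContDiff

open Complex in
noncomputable def csinc (z : ℂ) : ℂ :=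
  if z = 0 then 1 else Complex.sin (Real.pi * z) / (Real.pi * z)

lemma csinc_diff_ne {z : ℂ} (hz : z ≠ 0) : DifferentiableAt ℂ csinc z := by
  have h : ∀ᶠ w in nhds z, csinc w = Complex.sin (Real.pi * w) / (Real.pi * w) := by
    filter_upwards [isOpen_ne.eventually_mem (show z ∈ {w : ℂ | w ≠ 0} from hz)] with w hw
    simp [csinc, hw]
  have hd : DifferentiableAt ℂ (fun w => Complex.sin (Real.pi * w) / (Real.pi * w)) z := by
    apply DifferentiableAt.div
    · exact (Complex.differentiable_sin.comp ((differentiable_id.const_mul _ : Differentiable ℂ fun w : ℂ => (Real.pi : ℂ) * w))).differentiableAt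
    · exact ((differentiable_id.const_mul _ : Differentiable ℂ fun w : ℂ => (Real.pi : ℂ) * w)).differentiableAt
    · simp [hz, Real.pi_ne_zero, Complex.ofReal_ne_zero]
  exact hd.congr_of_eventuallyEq h

lemma tendsto_sin_div : Filter.Tendsto (fun z : ℂ => Complex.sin z / z) (nhdsWithin 0 {0}ᶜ) (nhds 1) := by
  have h := Complex.hasDerivAt_sin 0
  rw [hasDerivAt_iff_tendsto_slope] at h
  simp only [Complex.cos_zero] at h
  refine h.congr' ?_
  filter_upwards [self_mem_nhdsWithin] with z hz
  simp [slope_def_field, Complex.sin_zero, div_eq_mul_inv, mul_comm]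

lemma csinc_continuousAt_zero : ContinuousAt csinc 0 := by
  have hmap : Filter.Tendsto (fun z : ℂ => (Real.pi : ℂ) * z) (nhdsWithin 0 {0}ᶜ) (nhdsWithin 0 {0}ᶜ) := by
    rw [tendsto_nhdsWithin_iff]
    constructor
    · have hm : Filter.Tendsto (fun z : ℂ => (Real.pi : ℂ) * z) (nhds 0) (nhds 0) := by
        simpa using (continuous_mul_left (Real.pi : ℂ)).tendsto (0 : ℂ)
      exact hm.mono_left nhdsWithin_le_nhds
    · filter_upwards [self_mem_nhdsWithin] with z hz
      exact mul_ne_zero (by simp [Real.pi_ne_zero]) hz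
  have h1 : Filter.Tendsto csinc (nhdsWithin 0 {0}ᶜ) (nhds 1) := by
    refine (tendsto_sin_div.comp hmap).congr' ?_
    filter_upwards [self_mem_nhdsWithin] with z hz
    have hz' : z ≠ 0 := hz
    simp [csinc, hz', Function.comp]
  rw [ContinuousAt, ← nhdsNE_sup_pure 0]
  rw [Filter.tendsto_sup]
  constructor
  · simpa [csinc] using h1
  · have h0 : csinc 0 = 1 := by simp [csinc]
    simpa [h0] using tendsto_pure_nhds csinc 0

lemma csinc_analyticAt_zero : AnalyticAt ℂ csinc 0 :=
  Complex.analyticAt_of_differentiable_on_punctured_nhds_of_continuousAt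
    (by filter_upwards [self_mem_nhdsWithin] with z hz; exact csinc_diff_ne hz)
    csinc_continuousAt_zero

lemma sinc_eq_re (t : ℝ) : sinc t = (csinc t).re := by
  by_cases ht : t = 0
  · simp [sinc, csinc, ht]
  · have : (t : ℂ) ≠ 0 := Complex.ofReal_ne_zero.mpr ht
    simp only [sinc, csinc, ht, this, if_false]
    rw [show ((Real.pi : ℂ) * t) = ((Real.pi * t : ℝ) : ℂ) by push_cast; ring]
    rw [← Complex.ofReal_sin, ← Complex.ofReal_div, Complex.ofReal_re]

lemma contDiff_sinc : ContDiff ℝ (⊤ : ℕ∞) sinc := by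
  rw [contDiff_iff_contDiffAt]
  intro t
  by_cases ht : t = 0
  · subst ht
    have h0 : AnalyticAt ℝ (fun t : ℝ => (csinc t).re) 0 := by
      have h1 : AnalyticAt ℝ csinc (Complex.ofRealCLM (0 : ℝ)) := by
        simpa using csinc_analyticAt_zero.restrictScalars
      have h2 : AnalyticAt ℝ (fun t : ℝ => csinc t) 0 :=
        h1.comp (Complex.ofRealCLM.analyticAt 0)
      exact (Complex.reCLM.analyticAt _).comp h2
    have hfun : sinc = fun t : ℝ => (csinc t).re := funext sinc_eq_re
    rw [hfun]
    exact h0.contDiffAt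
  · have hev : sinc =ᶠ[nhds t] fun s => Real.sin (Real.pi * s) / (Real.pi * s) := by
    
      filter_upwards [isOpen_ne.eventually_mem (show t ∈ {s : ℝ | s ≠ 0} from ht)] with s hs
      simp [sinc, hs]
    have hd : ContDiffAt ℝ (⊤ : ℕ∞) (fun s => Real.sin (Real.pi * s) / (Real.pi * s)) t := by
      apply ContDiffAt.div
      · exact (Real.contDiff_sin.comp (contDiff_const.mul contDiff_id)).contDiffAt
      · exact (contDiff_const.mul contDiff_id).contDiffAt
      · exact mul_ne_zero Real.pi_ne_zero ht
    exact hd.congr_of_eventuallyEq hev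

open Real hiding sinc

lemma hasDerivAt_S (m : ℕ) (t : ℝ) :
    HasDerivAt (iteratedDeriv m sinc) (iteratedDeriv (m + 1) sinc t) t := by
  have hd : DifferentiableAt ℝ (iteratedDeriv m sinc) t :=
    (contDiff_sinc.differentiable_iteratedDeriv m (by exact_mod_cast lt_top_iff_ne_top.2 (by simp))) t
  simpa [iteratedDeriv_succ] using hd.hasDerivAt

lemma iteratedDeriv_sin_pi (k : ℕ) :
    iteratedDeriv k (fun t : ℝ => Real.sin (Real.pi * t)) =
      fun t => Real.pi ^ k * Real.sin (Real.pi * t + k * (Real.pi / 2)) := by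
  induction k with
  | zero => funext t; simp
  | succ k IH =>
    rw [iteratedDeriv_succ, IH]
    funext t
    have hin : HasDerivAt (fun t : ℝ => Real.pi * t + k * (Real.pi / 2)) Real.pi t := by
      simpa using ((hasDerivAt_id t).const_mul Real.pi).add_const ((k : ℝ) * (Real.pi / 2))
    have h : HasDerivAt (fun t : ℝ => Real.pi ^ k * Real.sin (Real.pi * t + k * (Real.pi / 2)))
        (Real.pi ^ k * (Real.cos (Real.pi * t + k * (Real.pi / 2)) * Real.pi)) t :=
      ((Real.hasDerivAt_sin _).comp t hin).const_mul _
    rw [h.deriv]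
    rw [show Real.pi * t + (k + 1 : ℕ) * (Real.pi / 2)
        = (Real.pi * t + k * (Real.pi / 2)) + Real.pi / 2 by push_cast; ring,
      Real.sin_add_pi_div_two]
    ring

lemma pi_mul_sinc (t : ℝ) : Real.pi * t * sinc t = Real.sin (Real.pi * t) := by
  by_cases ht : t = 0
  · simp [ht, sinc]
  · have : Real.pi * t ≠ 0 := mul_ne_zero Real.pi_ne_zero ht
    rw [sinc, if_neg ht]
    field_simp

lemma iteratedDeriv_pi_mul_sinc (k : ℕ) :
    iteratedDeriv k (fun t : ℝ => Real.pi * t * sinc t) =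
      fun t => Real.pi * t * iteratedDeriv k sinc t
        + (k : ℝ) * Real.pi * iteratedDeriv (k - 1) sinc t := by
  induction k with
  | zero => funext t; simp
  | succ k IH =>
    rw [iteratedDeriv_succ, IH]
    funext t
    have h : HasDerivAt
        (fun t : ℝ => Real.pi * t * iteratedDeriv k sinc t
          + (k : ℝ) * Real.pi * iteratedDeriv (k - 1) sinc t)
        ((Real.pi * 1) * iteratedDeriv k sinc t + (Real.pi * t) * iteratedDeriv (k+1) sinc t
          + (k : ℝ) * Real.pi * iteratedDeriv (k - 1 + 1) sinc t) t := by
      exact (((hasDerivAt_id t).const_mul Real.pi).mul (hasDerivAt_S k t)).add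
        ((hasDerivAt_S (k-1) t).const_mul _)
    rw [h.deriv]
    rcases Nat.eq_zero_or_pos k with hk | hk
    · subst hk; push_cast; ring
    · have h1 : k - 1 + 1 = k := Nat.succ_pred_eq_of_pos hk
      rw [h1]
      push_cast
      ring

lemma sinc_ident (k : ℕ) (t : ℝ) :
    Real.pi * t * iteratedDeriv k sinc t + (k : ℝ) * Real.pi * iteratedDeriv (k - 1) sinc t
      = Real.pi ^ k * Real.sin (Real.pi * t + k * (Real.pi / 2)) := by
  have hfun : (fun t : ℝ => Real.pi * t * sinc t) = fun t : ℝ => Real.sin (Real.pi * t) :=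
    funext pi_mul_sinc
  have := congrFun ((iteratedDeriv_pi_mul_sinc k).symm.trans (by rw [hfun, iteratedDeriv_sin_pi])) t
  exact this

lemma abs_sinc_le_one (t : ℝ) : |sinc t| ≤ 1 := by
  by_cases ht : t = 0
  · simp [ht, sinc]
  · have hpt : Real.pi * t ≠ 0 := mul_ne_zero Real.pi_ne_zero ht
    rw [sinc, if_neg ht, abs_div]
    rw [div_le_one (abs_pos.2 hpt)]
    exact Real.abs_sin_le_abs

lemma abs_mul_sinc_le_one (t : ℝ) : |t| * |sinc t| ≤ 1 := by
  by_cases ht : t = 0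
  · simp [ht]
  · rw [sinc, if_neg ht, abs_div, abs_mul, abs_of_pos Real.pi_pos]
    have h1 : |Real.sin (Real.pi * t)| ≤ 1 := Real.abs_sin_le_one _
    have h2 : (0:ℝ) < Real.pi * |t| := mul_pos Real.pi_pos (abs_pos.2 ht)
    rw [mul_div_assoc']
    rw [div_le_one h2]
    calc |t| * |Real.sin (Real.pi * t)| ≤ |t| * 1 :=
          mul_le_mul_of_nonneg_left h1 (abs_nonneg _)
      _ = |t| := mul_one _
      _ ≤ Real.pi * |t| := le_mul_of_one_le_left (abs_nonneg _) (by linarith [Real.pi_gt_three])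

lemma sinc_deriv_bounds (k : ℕ) :
    ∃ M : ℝ, 1 ≤ M ∧ (∀ t, |iteratedDeriv k sinc t| ≤ M)
      ∧ (∀ t, |t| * |iteratedDeriv k sinc t| ≤ M) := by
  induction k with
  | zero =>
    exact ⟨1, le_refl _, by simpa using _root_.abs_sinc_le_one, by simpa using abs_mul_sinc_le_one⟩
  | succ k IH =>
    obtain ⟨M, hM1, hMg, _⟩ := IH
    -- decay bound for k+1
    have hdecay : ∀ t, |t| * |iteratedDeriv (k+1) sinc t| ≤ Real.pi ^ k + (k + 1) * M := by
      intro t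
      have hid := sinc_ident (k+1) t
      simp only [Nat.add_sub_cancel] at hid
      have h1 : Real.pi * t * iteratedDeriv (k+1) sinc t
          = Real.pi ^ (k+1) * Real.sin (Real.pi * t + (k+1) * (Real.pi / 2))
            - ((k:ℝ)+1) * Real.pi * iteratedDeriv k sinc t := by
        push_cast at hid ⊢; linarith
      have h2 : Real.pi * (|t| * |iteratedDeriv (k+1) sinc t|)
          ≤ Real.pi ^ (k+1) + ((k:ℝ)+1) * Real.pi * M := by
        have := abs_le.1 (le_refl |Real.pi * t * iteratedDeriv (k+1) sinc t|)
        calc Real.pi * (|t| * |iteratedDeriv (k+1) sinc t|)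
            = |Real.pi * t * iteratedDeriv (k+1) sinc t| := by
              rw [abs_mul, abs_mul, abs_of_pos Real.pi_pos]; ring
          _ ≤ |Real.pi ^ (k+1) * Real.sin (Real.pi * t + (k+1) * (Real.pi / 2))|
                + |((k:ℝ)+1) * Real.pi * iteratedDeriv k sinc t| := by
              rw [h1]; exact abs_sub _ _
          _ ≤ Real.pi ^ (k+1) * 1 + ((k:ℝ)+1) * Real.pi * M := by
              gcongr
              · rw [abs_mul, abs_of_pos (pow_pos Real.pi_pos _)]
                gcongr
                exact Real.abs_sin_le_one _
              · rw [abs_mul, abs_mul]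
                rw [abs_of_nonneg (by positivity : (0:ℝ) ≤ (k:ℝ)+1), abs_of_pos Real.pi_pos]
                have := hMg t
                gcongr
          _ = Real.pi ^ (k+1) + ((k:ℝ)+1) * Real.pi * M := by ring
      have hpi : (0:ℝ) < Real.pi := Real.pi_pos
      nlinarith [abs_nonneg t, abs_nonneg (iteratedDeriv (k+1) sinc t),
        pow_pos Real.pi_pos k, pow_succ Real.pi k]
    -- sup bound on [-1,1]
    obtain ⟨Cc, hCc⟩ := (isCompact_Icc : IsCompact (Set.Icc (-1:ℝ) 1)).exists_bound_of_continuousOn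
      ((contDiff_sinc.continuous_iteratedDeriv (k+1) (by exact_mod_cast le_top)).continuousOn)
    set D := Real.pi ^ k + (k + 1) * M with hD
    refine ⟨max 1 (max Cc D), le_max_left _ _, ?_, ?_⟩
    · intro t
      by_cases ht : |t| ≤ 1
      · have : t ∈ Set.Icc (-1:ℝ) 1 := abs_le.1 ht
        calc |iteratedDeriv (k+1) sinc t| ≤ Cc := by simpa using hCc t this
          _ ≤ max 1 (max Cc D) := le_trans (le_max_left _ _) (le_max_right _ _)
      · push_neg at ht
        calc |iteratedDeriv (k+1) sinc t| ≤ |t| * |iteratedDeriv (k+1) sinc t| :=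
              le_mul_of_one_le_left (abs_nonneg _) ht.le
          _ ≤ D := hdecay t
          _ ≤ max 1 (max Cc D) := le_trans (le_max_right _ _) (le_max_right _ _)
    · intro t
      exact le_trans (hdecay t) (le_trans (le_max_right _ _) (le_max_right _ _))

/-- The combined per-coordinate bound. -/
lemma sinc_factor_bound (k : ℕ) :
    ∃ M : ℝ, 1 ≤ M ∧ ∀ (R : ℝ), 0 < R → ∀ (ν : ℤ) (s : ℝ), |s| < R →
      (iteratedDeriv k sinc ((ν : ℝ) + s)) ^ 2
        ≤ M * (if |(ν : ℝ)| ≤ 2 * R then (1:ℝ) else ((ν : ℝ) ^ 2)⁻¹) := by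
  obtain ⟨M, hM1, hMg, hMd⟩ := sinc_deriv_bounds k
  refine ⟨4 * M ^ 2, by nlinarith, ?_⟩
  intro R hR ν s hs
  by_cases hν : |(ν : ℝ)| ≤ 2 * R
  · rw [if_pos hν, mul_one]
    have h := hMg ((ν : ℝ) + s)
    calc (iteratedDeriv k sinc ((ν : ℝ) + s)) ^ 2
        = |iteratedDeriv k sinc ((ν : ℝ) + s)| ^ 2 := (sq_abs _).symm
      _ ≤ M ^ 2 := by nlinarith [abs_nonneg (iteratedDeriv k sinc ((ν : ℝ) + s))]
      _ ≤ 4 * M ^ 2 := by nlinarith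
  · rw [if_neg hν]
    push_neg at hν
    have hν0 : (0:ℝ) < |(ν : ℝ)| := lt_trans (by linarith) hν
    have hw : |(ν : ℝ)| / 2 ≤ |(ν : ℝ) + s| := by
      have h1 : |(ν : ℝ)| - |s| ≤ |(ν : ℝ) + s| := by
        have := abs_sub_abs_le_abs_sub (ν : ℝ) (-s)
        simp only [sub_neg_eq_add, abs_neg] at this
        linarith
      linarith [hs, hν]
    have hw0 : (0:ℝ) < |(ν : ℝ) + s| := lt_of_lt_of_le (by linarith) hw
    have hd := hMd ((ν : ℝ) + s)
    have habs : |iteratedDeriv k sinc ((ν : ℝ) + s)| ≤ 2 * M / |(ν : ℝ)| := by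
      rw [le_div_iff₀ hν0]
      calc |iteratedDeriv k sinc ((ν : ℝ) + s)| * |(ν : ℝ)|
          ≤ |iteratedDeriv k sinc ((ν : ℝ) + s)| * (2 * |(ν : ℝ) + s|) := by
            gcongr; linarith
        _ = 2 * (|(ν : ℝ) + s| * |iteratedDeriv k sinc ((ν : ℝ) + s)|) := by ring
        _ ≤ 2 * M := by linarith
    calc (iteratedDeriv k sinc ((ν : ℝ) + s)) ^ 2
        = |iteratedDeriv k sinc ((ν : ℝ) + s)| ^ 2 := (sq_abs _).symm
      _ ≤ (2 * M / |(ν : ℝ)|) ^ 2 := by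
          have := abs_nonneg (iteratedDeriv k sinc ((ν : ℝ) + s))
          gcongr
      _ = 4 * M ^ 2 * ((ν : ℝ) ^ 2)⁻¹ := by
          rw [div_pow, sq_abs]; ring

section multivar

open scoped ContDiff

variable {d : ℕ}

lemma coordDeriv_prod (g : Fin d → ℝ → ℝ) (hg : ∀ i, ContDiff ℝ ∞ (g i)) (j : Fin d) :
    coordDeriv j (fun x : Fin d → ℝ => ∏ i, g i (x i))
      = fun x => ∏ i, Function.update g j (deriv (g j)) i (x i) := by
  funext x
  have hFi : ∀ i : Fin d, HasFDerivAt (fun x : Fin d → ℝ => g i (x i))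
      ((deriv (g i) (x i)) • (ContinuousLinearMap.proj i : (Fin d → ℝ) →L[ℝ] ℝ)) x := by
    intro i
    have hd : HasDerivAt (g i) (deriv (g i) (x i)) (x i) :=
      (((hg i).differentiable (by simp)) (x i)).hasDerivAt
    exact hd.comp_hasFDerivAt x (hasFDerivAt_apply i x)
  have hP := HasFDerivAt.finset_prod (u := Finset.univ) (fun i _ => hFi i)
  have hder : coordDeriv j (fun x : Fin d → ℝ => ∏ i, g i (x i)) x
      = (∑ i, (∏ k ∈ Finset.univ.erase i, g k (x k)) •
          ((deriv (g i) (x i)) • (ContinuousLinearMap.proj i : (Fin d → ℝ) →L[ℝ] ℝ)))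
          (Pi.single j 1) := by
    rw [coordDeriv, hP.fderiv]
  rw [hder]
  rw [ContinuousLinearMap.sum_apply]
  rw [Finset.sum_eq_single j]
  · simp only [ContinuousLinearMap.smul_apply, ContinuousLinearMap.proj_apply,
      Pi.single_eq_same, smul_eq_mul, mul_one]
    rw [← Finset.mul_prod_erase Finset.univ _ (Finset.mem_univ j)]
    rw [Function.update_self]
    have : ∀ k ∈ Finset.univ.erase j, Function.update g j (deriv (g j)) k (x k) = g k (x k) := by
      intro k hk
      rw [Function.update_of_ne (Finset.ne_of_mem_erase hk)]
    rw [Finset.prod_congr rfl this]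
    ring
  · intro i _ hij
    simp [Pi.single_eq_of_ne hij]
  · intro h; exact absurd (Finset.mem_univ j) h

lemma coordDeriv_iterate_prod (g : Fin d → ℝ → ℝ) (hg : ∀ i, ContDiff ℝ ∞ (g i)) (j : Fin d)
    (m : ℕ) :
    (coordDeriv j)^[m] (fun x : Fin d → ℝ => ∏ i, g i (x i))
      = fun x => ∏ i, Function.update g j (deriv^[m] (g j)) i (x i) := by
  induction m with
  | zero => simp [Function.update_eq_self]
  | succ m IH =>
    rw [Function.iterate_succ_apply', IH]
    have hg' : ∀ i, ContDiff ℝ ∞ (Function.update g j (deriv^[m] (g j)) i) := by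
      intro i
      by_cases hij : i = j
      · subst hij; rw [Function.update_self]; exact (hg i).iterate_deriv m
      · rw [Function.update_of_ne hij]; exact hg i
    rw [coordDeriv_prod _ hg' j]
    funext x
    refine Finset.prod_congr rfl fun i _ => ?_
    by_cases hij : i = j
    · subst hij
      rw [Function.update_self, Function.update_self, Function.update_self,
        Function.iterate_succ_apply']
    · rw [Function.update_of_ne hij, Function.update_of_ne hij, Function.update_of_ne hij]

lemma foldr_multiDeriv (α : Fin d → ℕ) (g : Fin d → ℝ → ℝ) (hg : ∀ i, ContDiff ℝ ∞ (g i)) :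
    ∀ l : List (Fin d), l.Nodup →
      List.foldr (fun j h => (coordDeriv j)^[α j] h) (fun x : Fin d → ℝ => ∏ i, g i (x i)) l
        = fun x => ∏ i, (if i ∈ l then deriv^[α i] (g i) else g i) (x i) := by
  intro l
  induction l with
  | nil => intro _; simp
  | cons j l IH =>
    intro hnd
    have hj : j ∉ l := (List.nodup_cons.1 hnd).1
    have hl : l.Nodup := (List.nodup_cons.1 hnd).2
    rw [List.foldr_cons, IH hl]
    have hgl : ∀ i, ContDiff ℝ ∞ (fun t => (if i ∈ l then deriv^[α i] (g i) else g i) t) := by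
      intro i
      by_cases hi : i ∈ l
      · simpa [hi] using (hg i).iterate_deriv (α i)
      · simpa [hi] using hg i
    have := coordDeriv_iterate_prod (fun i => if i ∈ l then deriv^[α i] (g i) else g i)
      hgl j (α j)
    rw [this]
    funext x
    refine Finset.prod_congr rfl fun i _ => ?_
    by_cases hij : i = j
    · subst hij
      rw [Function.update_self]
      simp [hj, List.mem_cons]
    · rw [Function.update_of_ne hij]
      by_cases hi : i ∈ l <;> simp [hi, hij, List.mem_cons]

lemma multiDeriv_prod_eq (α : Fin d → ℕ) (g : Fin d → ℝ → ℝ) (hg : ∀ i, ContDiff ℝ ∞ (g i)) :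
    multiDeriv α (fun x : Fin d → ℝ => ∏ i, g i (x i))
      = fun x => ∏ i, deriv^[α i] (g i) (x i) := by
  rw [multiDeriv, foldr_multiDeriv α g hg (List.finRange d) (List.nodup_finRange d)]
  funext x
  exact Finset.prod_congr rfl fun i _ => by simp [List.mem_finRange]

end multivar


/-- With `m(R,ν) = 1` if `|ν| ≤ 2R` and `m(R,ν) = ν^{-2}` if `|ν| > 2R`,
for every multiindex `α ∈ ℕ^d` there is a constant `C = C(α,d) > 0` such that
`∫_{B_R} |∂^α φ̂_n(x)|² dx ≤ C R^d ∏_j m(R, n_j)` for all `R > 0` and all `n ∈ ℤ^d`,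
where `B_R` is the open Euclidean ball of radius `R` centered at the origin in `ℝ^d`. -/
theorem stmt4 (d : ℕ) (α : Fin d → ℕ) :
    ∃ C > 0, ∀ (R : ℝ), 0 < R → ∀ n : Fin d → ℤ,
      (∫ x in {x : Fin d → ℝ | ∑ j, x j ^ 2 < R ^ 2}, (multiDeriv α (phihat n) x) ^ 2) ≤
        C * R ^ d * ∏ j, (if |(n j : ℝ)| ≤ 2 * R then (1 : ℝ) else ((n j : ℝ) ^ 2)⁻¹) := by
  choose M hM using fun j : Fin d => sinc_factor_bound (α j)
  have hM1 : ∀ j, 1 ≤ M j := fun j => (hM j).1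
  have hMpos : (0:ℝ) < ∏ j, M j := Finset.prod_pos fun j _ => lt_of_lt_of_le one_pos (hM1 j)
  refine ⟨2 ^ d * ∏ j, M j, by positivity, ?_⟩
  intro R hR n
  -- the derivative formula
  have hgs : ∀ i : Fin d, ContDiff ℝ ∞ (fun t : ℝ => sinc ((n i : ℝ) + t)) := fun i =>
    (contDiff_sinc.of_le (mod_cast le_top)).comp (contDiff_const.add contDiff_id)
  have hrepr : multiDeriv α (phihat n)
      = fun x : Fin d → ℝ => ∏ i, iteratedDeriv (α i) sinc ((n i : ℝ) + x i) := by
    have h0 : phihat n = fun x : Fin d → ℝ => ∏ i, (fun t => sinc ((n i : ℝ) + t)) (x i) := rfl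
    rw [h0, multiDeriv_prod_eq α _ hgs]
    funext x
    refine Finset.prod_congr rfl fun i _ => ?_
    rw [← iteratedDeriv_eq_iterate, iteratedDeriv_comp_const_add]
  set s : Set (Fin d → ℝ) := {x : Fin d → ℝ | ∑ j, x j ^ 2 < R ^ 2} with hs
  set m : Fin d → ℝ := fun j => if |(n j : ℝ)| ≤ 2 * R then (1:ℝ) else ((n j : ℝ) ^ 2)⁻¹ with hm
  have hm0 : ∀ j, 0 ≤ m j := by
    intro j; rw [hm]; dsimp only
    split <;> positivity
  have hB0 : (0:ℝ) ≤ ∏ j, M j * m j :=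
    Finset.prod_nonneg fun j _ => mul_nonneg (by linarith [hM1 j]) (hm0 j)
  -- pointwise bound on s
  have hpt : ∀ x ∈ s, (multiDeriv α (phihat n) x) ^ 2 ≤ ∏ j, M j * m j := by
    intro x hx
    have hxj : ∀ j, |x j| < R := by
      intro j
      have h1 : x j ^ 2 ≤ ∑ i, x i ^ 2 :=
        Finset.single_le_sum (fun i _ => sq_nonneg (x i)) (Finset.mem_univ j)
      have h2 : x j ^ 2 < R ^ 2 := lt_of_le_of_lt h1 hx
      nlinarith [abs_nonneg (x j), sq_abs (x j)]
    rw [hrepr]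
    dsimp only
    rw [← Finset.prod_pow]
    exact Finset.prod_le_prod (fun j _ => sq_nonneg _)
      (fun j _ => (hM j).2 R hR (n j) (x j) (hxj j))
  -- measure bound
  have hsub : s ⊆ Set.pi Set.univ fun _ : Fin d => Set.Ioo (-R) R := by
    intro x hx
    rw [Set.mem_pi]
    intro j _
    have hxj : |x j| < R := by
      have h1 : x j ^ 2 ≤ ∑ i, x i ^ 2 :=
        Finset.single_le_sum (fun i _ => sq_nonneg (x i)) (Finset.mem_univ j)
      have h2 : x j ^ 2 < R ^ 2 := lt_of_le_of_lt h1 hx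
      nlinarith [abs_nonneg (x j), sq_abs (x j)]
    exact abs_lt.1 hxj
  have hboxvol : volume (Set.pi Set.univ fun _ : Fin d => Set.Ioo (-R) R)
      = ENNReal.ofReal (2 * R) ^ d := by
    rw [volume_pi_pi]
    simp [Real.volume_Ioo]
    congr 1
    ring_nf
    rw [ENNReal.ofReal_mul hR.le]
    simp
  have hsvol : volume s ≤ ENNReal.ofReal (2 * R) ^ d := hboxvol ▸ measure_mono hsub
  have hpownetop : ENNReal.ofReal (2 * R) ^ d ≠ ⊤ :=
    ENNReal.pow_ne_top ENNReal.ofReal_ne_top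
  have hsfin : volume s < ⊤ :=
    lt_of_le_of_lt hsvol (lt_top_iff_ne_top.2 hpownetop)
  have hsmeas : MeasurableSet s := by
    have : IsOpen s := isOpen_lt (by continuity) continuous_const
    exact this.measurableSet
  have hvolR : (volume s).toReal ≤ (2 * R) ^ d := by
    have h1 : (volume s).toReal ≤ (ENNReal.ofReal (2 * R) ^ d).toReal :=
      ENNReal.toReal_mono hpownetop hsvol
    rwa [ENNReal.toReal_pow, ENNReal.toReal_ofReal (by linarith)] at h1
  -- integral bound
  have hint : ∫ x in s, (multiDeriv α (phihat n) x) ^ 2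
      ≤ (∏ j, M j * m j) * (volume s).toReal := by
    have hnorm := norm_setIntegral_le_of_norm_le_const_ae' (μ := volume)
      (f := fun x => (multiDeriv α (phihat n) x) ^ 2) hsfin
      (C := ∏ j, M j * m j)
      (Filter.Eventually.of_forall fun x hx => by
        rw [Real.norm_eq_abs, abs_of_nonneg (sq_nonneg _)]
        exact hpt x hx)
    calc ∫ x in s, (multiDeriv α (phihat n) x) ^ 2
        ≤ ‖∫ x in s, (multiDeriv α (phihat n) x) ^ 2‖ := le_abs_self _
      _ ≤ (∏ j, M j * m j) * (volume s).toReal := hnorm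
  calc ∫ x in s, (multiDeriv α (phihat n) x) ^ 2
      ≤ (∏ j, M j * m j) * (volume s).toReal := hint
    _ ≤ (∏ j, M j * m j) * (2 * R) ^ d := mul_le_mul_of_nonneg_left hvolR hB0
    _ = (2 ^ d * ∏ j, M j) * R ^ d * ∏ j, m j := by
        rw [Finset.prod_mul_distrib, mul_pow]; ring
end

section
/- Let f : ℝ → ℝ be the sinc function, f(t) = sin(πt)/(πt) for t ≠ 0 and f(0) = 1, and for n ∈ ℤ^d let φ̂_n(x) = ∏_{j=1}^d f(n_j + x_j). Then for every constant ρ > d and every multiindex α ∈ ℕ^d, the weighted sum ∑_{n ∈ ℤ^d} ∫_{ℝ^d} (1 + |x|²)^{-ρ} |∂^α φ̂_n(x)|² dx is finite. -/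
open scoped BigOperators

open MeasureTheory

open Real hiding sinc
open Set
open scoped ENNReal Interval

/-!
Since `sinc t = ∫₀¹ cos (π t s) ds`, its `k`-th derivative is
`∫₀¹ (π s)ᵏ cos (π t s + k π / 2) ds`, bounded by `πᵏ`. Leibniz's rule applied to
`t * sinc t = sin (π t) / π` gives
`t sinc⁽ᵏ⁺¹⁾ t + (k + 1) sinc⁽ᵏ⁾ t = πᵏ sin (π t + (k + 1) π / 2)`,
whence `|t sinc⁽ᵏ⁾ t| ≤ (k + 1) πᵏ` and `(sinc⁽ᵏ⁾ t)² ≲ (1 + t²)⁻¹`. As `φ̂_n` is a tensor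
product, `|∂^α φ̂_n (x)|² ≲ ∏ⱼ (1 + (n_j + x_j)²)⁻¹`, and the sum of this over `n ∈ ℤ^d` is
bounded uniformly in `x` (shift `n` by the nearest lattice point to `x`). By Tonelli the claim
reduces to the integrability of `(1 + |x|²)^{-ρ}` for `ρ > d`.
-/

noncomputable def sincKernel (k : ℕ) (t s : ℝ) : ℝ := (π * s) ^ k * cos (π * t * s + k * (π / 2))

noncomputable def sincDeriv (k : ℕ) (t : ℝ) : ℝ := ∫ s in (0 : ℝ)..1, sincKernel k t s

lemma continuous_sincKernel (k : ℕ) (t : ℝ) : Continuous (sincKernel k t) := by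
  unfold sincKernel; fun_prop

lemma abs_sincKernel_le (k : ℕ) (t : ℝ) {s : ℝ} (hs : s ∈ Ι (0 : ℝ) 1) :
    |sincKernel k t s| ≤ π ^ k := by
  rw [uIoc_of_le zero_le_one] at hs
  have hπs : 0 ≤ π * s := mul_nonneg pi_pos.le hs.1.le
  rw [sincKernel, abs_mul, abs_pow, abs_of_nonneg hπs]
  calc (π * s) ^ k * |cos (π * t * s + k * (π / 2))| ≤ π ^ k * 1 := by
        gcongr
        · exact mul_le_of_le_one_right pi_pos.le hs.2
        · exact abs_cos_le_one _
    _ = π ^ k := mul_one _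

lemma hasDerivAt_sincKernel (k : ℕ) (t s : ℝ) :
    HasDerivAt (fun t => sincKernel k t s) (sincKernel (k + 1) t s) t := by
  have hphase : HasDerivAt (fun t => π * t * s + k * (π / 2)) (π * s) t := by
    simpa [mul_assoc] using ((hasDerivAt_mul_const s).const_mul π).add_const ((k : ℝ) * (π / 2))
  refine (hphase.cos.const_mul ((π * s) ^ k)).congr_deriv ?_
  rw [sincKernel, Nat.cast_succ, add_mul, one_mul, ← add_assoc, cos_add_pi_div_two]
  ring

lemma hasDerivAt_sincDeriv (k : ℕ) (t : ℝ) :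
    HasDerivAt (sincDeriv k) (sincDeriv (k + 1) t) t :=
  (intervalIntegral.hasDerivAt_integral_of_dominated_loc_of_deriv_le
    (bound := fun _ => π ^ (k + 1)) (Metric.ball_mem_nhds t one_pos)
    (Filter.Eventually.of_forall fun t => (continuous_sincKernel k t).aestronglyMeasurable)
    ((continuous_sincKernel k t).intervalIntegrable 0 1)
    (continuous_sincKernel (k + 1) t).aestronglyMeasurable
    (ae_of_all _ fun _ hs t _ => abs_sincKernel_le (k + 1) t hs)
    intervalIntegrable_const
    (ae_of_all _ fun s _ t _ => hasDerivAt_sincKernel k t s)).2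

lemma sincDeriv_zero : sincDeriv 0 = sinc := by
  funext t
  simp only [sincDeriv, sincKernel, pow_zero, one_mul, Nat.cast_zero, zero_mul, add_zero,
    sinc]
  split_ifs with ht
  · simp [ht]
  · rw [intervalIntegral.integral_comp_mul_left cos (mul_ne_zero pi_ne_zero ht)]
    simp [div_eq_inv_mul]

lemma abs_sincDeriv_le (k : ℕ) (t : ℝ) : |sincDeriv k t| ≤ π ^ k := by
  simpa [sincDeriv] using intervalIntegral.norm_integral_le_of_norm_le_const
    (a := 0) (b := 1) fun s hs => (norm_eq_abs _).trans_le (abs_sincKernel_le k t hs)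

lemma mul_sinc (t : ℝ) : t * sinc t = sin (π * t) / π := by
  rw [sinc]
  split_ifs with ht
  · simp [ht]
  · field_simp [pi_ne_zero]

lemma hasDerivAt_mul_sincDeriv (k : ℕ) (t : ℝ) :
    HasDerivAt (fun t => t * sincDeriv k t) (sincDeriv k t + t * sincDeriv (k + 1) t) t :=
  ((hasDerivAt_id' t).fun_mul (hasDerivAt_sincDeriv k t)).congr_deriv (by rw [one_mul])

lemma mul_sincDeriv_succ_add (k : ℕ) (t : ℝ) :
    t * sincDeriv (k + 1) t + (k + 1) * sincDeriv k t =
      π ^ k * sin (π * t + (k + 1) * (π / 2)) := by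
  induction k generalizing t with
  | zero =>
    have hR : HasDerivAt (fun t => sin (π * t) / π) (cos (π * t)) t :=
      (((hasDerivAt_id' t).const_mul π).sin.div_const π).congr_deriv (by field_simp)
    have hL := hasDerivAt_mul_sincDeriv 0 t
    rw [sincDeriv_zero, funext mul_sinc, ← sincDeriv_zero] at hL
    have := hL.unique hR
    simp only [Nat.cast_zero, zero_add, pow_zero, one_mul, sin_add_pi_div_two]
    linarith
  | succ k ih =>
    have hR : HasDerivAt (fun t => π ^ k * sin (π * t + (k + 1) * (π / 2)))
        (π ^ (k + 1) * sin (π * t + (k + 1 + 1) * (π / 2))) t := by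
      refine ((((hasDerivAt_id' t).const_mul π).add_const ((k + 1) * (π / 2))).sin.const_mul
        (π ^ k)).congr_deriv ?_
      rw [add_one_mul ((k : ℝ) + 1), ← add_assoc, sin_add_pi_div_two]
      ring
    have hL := (hasDerivAt_mul_sincDeriv (k + 1) t).fun_add
      ((hasDerivAt_sincDeriv k t).const_mul ((k : ℝ) + 1))
    rw [funext ih] at hL
    have := hL.unique hR
    push_cast
    linarith

lemma abs_mul_sincDeriv_le (k : ℕ) (t : ℝ) : |t * sincDeriv k t| ≤ (k + 1) * π ^ k := by
  cases k with
  | zero =>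
    rw [sincDeriv_zero, mul_sinc, abs_div, abs_of_pos pi_pos]
    calc |sin (π * t)| / π ≤ 1 / 1 :=
          div_le_div₀ zero_le_one (abs_sin_le_one _) one_pos (by linarith [pi_gt_three])
      _ = ((0 : ℕ) + 1) * π ^ 0 := by simp
  | succ k =>
    have hid := mul_sincDeriv_succ_add k t
    have hsin := abs_sin_le_one (π * t + (k + 1) * (π / 2))
    have hder := abs_sincDeriv_le k t
    calc |t * sincDeriv (k + 1) t|
        = |π ^ k * sin (π * t + (k + 1) * (π / 2)) - (k + 1) * sincDeriv k t| := by
          rw [← hid, add_sub_cancel_right]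
      _ ≤ π ^ k * 1 + (k + 1) * π ^ k := by
          refine (abs_sub _ _).trans (add_le_add ?_ ?_) <;>
            rw [abs_mul, abs_of_nonneg (by positivity)] <;> gcongr
      _ ≤ ((k + 1 : ℕ) + 1) * π ^ (k + 1) := by
          rw [pow_succ, ← mul_assoc]; push_cast
          have : 0 ≤ ((k : ℝ) + 1 + 1) * π ^ k := by positivity
          nlinarith [pi_gt_three]

lemma sq_sincDeriv_le (k : ℕ) (t : ℝ) :
    sincDeriv k t ^ 2 ≤ 2 * ((k + 1) * π ^ k) ^ 2 * (1 + t ^ 2)⁻¹ := by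
  rw [← div_eq_mul_inv, le_div_iff₀ (by positivity)]
  have hB : π ^ k ≤ (k + 1) * π ^ k := le_mul_of_one_le_left (by positivity) (by linarith)
  have h₁ := sq_le_sq' (neg_le_of_abs_le ((abs_sincDeriv_le k t).trans hB))
    (le_of_abs_le ((abs_sincDeriv_le k t).trans hB))
  have h₂ := sq_le_sq' (neg_le_of_abs_le (abs_mul_sincDeriv_le k t))
    (le_of_abs_le (abs_mul_sincDeriv_le k t))
  nlinarith

section SeparableProduct

variable {d : ℕ} {F : Fin d → ℕ → ℝ → ℝ}

lemma coordDeriv_prod_s6 (hF : ∀ i k t, HasDerivAt (F i k) (F i (k + 1) t) t)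
    (m : Fin d → ℕ) (j : Fin d) :
    coordDeriv j (fun x => ∏ i, F i (m i) (x i)) =
      fun x => ∏ i, F i ((m + Pi.single j 1 : Fin d → ℕ) i) (x i) := by
  classical
  funext x
  have hfac := fun i (_ : i ∈ Finset.univ) =>
    (hF i (m i) (x i)).hasFDerivAt.comp x (hasFDerivAt_apply (𝕜 := ℝ) i x)
  rw [coordDeriv,
    (HasFDerivAt.finsetProd (g := fun i (y : Fin d → ℝ) => F i (m i) (y i)) hfac).fderiv,
    ← Finset.mul_prod_erase _ _ (Finset.mem_univ j)]
  simp only [sum_apply, smul_apply, ContinuousLinearMap.comp_apply,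
    ContinuousLinearMap.proj_apply, Pi.single_apply, ContinuousLinearMap.toSpanSingleton_apply,
    smul_eq_mul, mul_comm, mul_ite, mul_one, mul_zero, ite_mul, zero_mul, Finset.sum_ite_eq',
    Finset.mem_univ, ↓reduceIte, Pi.add_apply, mul_eq_mul_left_iff]
  exact .inl (Finset.prod_congr rfl fun i hi => by simp [Finset.ne_of_mem_erase hi])

lemma iterate_coordDeriv_prod (hF : ∀ i k t, HasDerivAt (F i k) (F i (k + 1) t) t)
    (m : Fin d → ℕ) (j : Fin d) (k : ℕ) :
    (coordDeriv j)^[k] (fun x => ∏ i, F i (m i) (x i)) =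
      fun x => ∏ i, F i ((m + Pi.single j k : Fin d → ℕ) i) (x i) := by
  induction k generalizing m with
  | zero => simp
  | succ k ih =>
    rw [Function.iterate_succ_apply, coordDeriv_prod_s6 hF, ih, add_assoc, ← Pi.single_add,
      add_comm 1 k]

lemma foldr_coordDeriv_prod (hF : ∀ i k t, HasDerivAt (F i k) (F i (k + 1) t) t)
    (α m : Fin d → ℕ) (l : List (Fin d)) :
    l.foldr (fun j h => (coordDeriv j)^[α j] h) (fun x => ∏ i, F i (m i) (x i)) =
      fun x => ∏ i, F i (m i + l.count i * α i) (x i) := by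
  induction l with
  | nil => simp
  | cons j l ih =>
    rw [List.foldr_cons, ih, iterate_coordDeriv_prod hF]
    funext x
    refine Finset.prod_congr rfl fun i _ => ?_
    rcases eq_or_ne i j with rfl | hij
    · simp [add_mul, add_assoc]
    · simp [hij, Ne.symm hij]

lemma multiDeriv_prod (hF : ∀ i k t, HasDerivAt (F i k) (F i (k + 1) t) t) (α : Fin d → ℕ) :
    multiDeriv α (fun x => ∏ i, F i 0 (x i)) = fun x => ∏ i, F i (α i) (x i) := by
  have h := foldr_coordDeriv_prod hF α 0 (List.finRange d)
  simp only [Pi.zero_apply, zero_add,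
    List.count_eq_one_of_mem (List.nodup_finRange d) (List.mem_finRange _), one_mul] at h
  exact h

end SeparableProduct

lemma multiDeriv_phihat {d : ℕ} (α : Fin d → ℕ) (n : Fin d → ℤ) :
    multiDeriv α (phihat n) = fun x => ∏ i, sincDeriv (α i) (n i + x i) := by
  have hphihat : phihat n = fun x => ∏ i, sincDeriv 0 (n i + x i) := by
    simp only [sincDeriv_zero]; rfl
  rw [hphihat, multiDeriv_prod (F := fun i k t => sincDeriv k (n i + t))
    fun i k t => (hasDerivAt_sincDeriv k _).comp_const_add _ t]

lemma sq_multiDeriv_phihat_le {d : ℕ} (α : Fin d → ℕ) (n : Fin d → ℤ) (x : Fin d → ℝ) :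
    multiDeriv α (phihat n) x ^ 2 ≤
      ∏ i, 2 * ((α i + 1) * π ^ α i) ^ 2 * (1 + (n i + x i) ^ 2)⁻¹ := by
  rw [multiDeriv_phihat, ← Finset.prod_pow]
  exact Finset.prod_le_prod (fun i _ => sq_nonneg _) fun i _ => sq_sincDeriv_le _ _

lemma tsum_prod_eq_prod_tsum {β : Type*} {d : ℕ} (f : Fin d → β → ℝ≥0∞) :
    ∑' n : Fin d → β, ∏ i, f i (n i) = ∏ i, ∑' b, f i b := by
  induction d with
  | zero => simp
  | succ d ih =>
    rw [← (Fin.consEquiv fun _ => β).tsum_eq, Fin.prod_univ_succ, ← ih, ← ENNReal.tsum_mul_right]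
    simp only [Fin.consEquiv, Equiv.coe_fn_mk, Fin.prod_univ_succ, Fin.cons_zero, Fin.cons_succ]
    rw [ENNReal.tsum_prod (f := fun b (n : Fin d → β) => f 0 b * ∏ i : Fin d, f i.succ (n i))]
    simp only [ENNReal.tsum_mul_left]

lemma summable_inv_one_add_sq_int : Summable fun m : ℤ => (1 + (m : ℝ) ^ 2)⁻¹ := by
  refine (summable_one_div_int_pow.mpr one_lt_two).of_norm_bounded_eventually ?_
  filter_upwards [Filter.eventually_cofinite_ne 0] with m hm
  rw [norm_inv, Real.norm_of_nonneg (by positivity), one_div]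
  exact inv_anti₀ (by positivity) (le_add_of_nonneg_left zero_le_one)

lemma tsum_ofReal_inv_one_add_sq_int_add_le {c : ℝ} (hc : 0 ≤ c) (x : ℝ) :
    ∑' m : ℤ, ENNReal.ofReal (c * (1 + (m + x) ^ 2)⁻¹) ≤
      ENNReal.ofReal (2 * c * ∑' m : ℤ, (1 + (m : ℝ) ^ 2)⁻¹) := by
  have hpt (m : ℤ) : c * (1 + (m + x) ^ 2)⁻¹ ≤ 2 * c * (1 + ((m + round x : ℤ) : ℝ) ^ 2)⁻¹ := by
    have hx : (x - round x) ^ 2 ≤ 1 / 4 := by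
      nlinarith [abs_le.mp (abs_sub_round x)]
    rw [mul_comm 2 c, mul_assoc]
    gcongr
    calc (1 + (m + x) ^ 2)⁻¹ ≤ ((1 + ((m + round x : ℤ) : ℝ) ^ 2) / 2)⁻¹ := by
          refine inv_anti₀ (by positivity) ?_
          push_cast
          nlinarith [sq_nonneg (m + x + (x - round x))]
      _ = 2 * (1 + ((m + round x : ℤ) : ℝ) ^ 2)⁻¹ := by rw [inv_div, div_eq_mul_inv]
  rw [← tsum_mul_left, ENNReal.ofReal_tsum_of_nonneg (fun m => by positivity)
    (summable_inv_one_add_sq_int.mul_left _),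
    ← (Equiv.addRight (round x)).tsum_eq fun m : ℤ => ENNReal.ofReal (2 * c * (1 + (m : ℝ) ^ 2)⁻¹)]
  exact ENNReal.tsum_le_tsum fun m => ENNReal.ofReal_le_ofReal (hpt m)

lemma tsum_prod_ofReal_inv_one_add_sq_le {d : ℕ} {c : Fin d → ℝ} (hc : ∀ i, 0 ≤ c i)
    (x : Fin d → ℝ) :
    ∑' n : Fin d → ℤ, ∏ i, ENNReal.ofReal (c i * (1 + (n i + x i) ^ 2)⁻¹) ≤
      ∏ i, ENNReal.ofReal (2 * c i * ∑' m : ℤ, (1 + (m : ℝ) ^ 2)⁻¹) := by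
  rw [tsum_prod_eq_prod_tsum fun i (m : ℤ) => ENNReal.ofReal (c i * (1 + (m + x i) ^ 2)⁻¹)]
  gcongr with i
  exact tsum_ofReal_inv_one_add_sq_int_add_le (hc i) (x i)

lemma pi_norm_sq_le_sum_sq {d : ℕ} (x : Fin d → ℝ) : ‖x‖ ^ 2 ≤ ∑ j, x j ^ 2 := by
  have hsum : 0 ≤ ∑ j, x j ^ 2 := by positivity
  refine (Real.le_sqrt (norm_nonneg x) hsum).mp
    ((pi_norm_le_iff_of_nonneg (Real.sqrt_nonneg _)).mpr fun i => ?_)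
  rw [Real.norm_eq_abs]
  exact Real.abs_le_sqrt (Finset.single_le_sum (fun j _ => sq_nonneg (x j)) (Finset.mem_univ i))

lemma integrable_one_add_sum_sq_rpow_neg {d : ℕ} {ρ : ℝ} (hρ : (d : ℝ) < ρ) :
    Integrable fun x : Fin d → ℝ => (1 + ∑ j, x j ^ 2) ^ (-ρ) := by
  have hdim : (Module.finrank ℝ (Fin d → ℝ) : ℝ) < 2 * ρ := by
    rw [Module.finrank_fin_fun]; linarith [(Nat.cast_nonneg d : (0 : ℝ) ≤ d)]
  have hcont : Continuous fun x : Fin d → ℝ => (1 + ∑ j, x j ^ 2) ^ (-ρ) :=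
    (by fun_prop : Continuous fun x : Fin d → ℝ => 1 + ∑ j, x j ^ 2).rpow_const
      fun x => .inl (by positivity)
  refine (integrable_rpow_neg_one_add_norm_sq hdim).mono' hcont.aestronglyMeasurable
    (ae_of_all _ fun x => ?_)
  rw [Real.norm_of_nonneg (by positivity), neg_div, mul_div_cancel_left₀ ρ two_ne_zero]
  exact Real.rpow_le_rpow_of_nonpos (by positivity) (by linarith [pi_norm_sq_le_sum_sq x])
    (by linarith [(Nat.cast_nonneg d : (0 : ℝ) ≤ d)])

/-- For every `ρ > d` and every multiindex `α ∈ ℕ^d`, the weighted sum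
`∑_{n ∈ ℤ^d} ∫_{ℝ^d} (1 + |x|²)^{-ρ} |∂^α φ̂_n(x)|² dx` is finite. -/
theorem stmt6 (d : ℕ) (ρ : ℝ) (hρ : (d : ℝ) < ρ) (α : Fin d → ℕ) :
    (∑' n : Fin d → ℤ,
        ∫⁻ x : Fin d → ℝ,
          ENNReal.ofReal ((1 + ∑ j, x j ^ 2) ^ (-ρ) * (multiDeriv α (phihat n) x) ^ 2)) < ⊤ := by
  set w := fun x : Fin d → ℝ => (1 + ∑ j, x j ^ 2) ^ (-ρ)
  set C := fun i => 2 * ((α i + 1) * π ^ α i) ^ 2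
  have hpt (n : Fin d → ℤ) (x : Fin d → ℝ) :
      ENNReal.ofReal (w x * multiDeriv α (phihat n) x ^ 2) ≤
        ENNReal.ofReal (w x) * ∏ i, ENNReal.ofReal (C i * (1 + (n i + x i) ^ 2)⁻¹) := by
    rw [ENNReal.ofReal_mul (by positivity),
      ← ENNReal.ofReal_prod_of_nonneg fun i _ => by positivity]
    gcongr
    exact sq_multiDeriv_phihat_le α n x
  set M := ∏ i, ENNReal.ofReal (2 * C i * ∑' m : ℤ, (1 + (m : ℝ) ^ 2)⁻¹)
  have hM : M ≠ ⊤ := ENNReal.prod_ne_top fun i _ => ENNReal.ofReal_ne_top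
  calc _ ≤ ∑' n : Fin d → ℤ, ∫⁻ x,
          ENNReal.ofReal (w x) * ∏ i, ENNReal.ofReal (C i * (1 + (n i + x i) ^ 2)⁻¹) :=
        ENNReal.tsum_le_tsum fun n => lintegral_mono (hpt n)
    _ = ∫⁻ x, ENNReal.ofReal (w x) *
          ∑' n : Fin d → ℤ, ∏ i, ENNReal.ofReal (C i * (1 + (n i + x i) ^ 2)⁻¹) := by
        simp_rw [← ENNReal.tsum_mul_left]
        exact (lintegral_tsum fun n => by fun_prop).symm
    _ ≤ ∫⁻ x, ENNReal.ofReal (w x) * M := by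
        gcongr with x
        exact tsum_prod_ofReal_inv_one_add_sq_le (fun i => by positivity) x
    _ < ⊤ := by
        rw [lintegral_mul_const' _ _ hM]
        exact ENNReal.mul_lt_top (integrable_one_add_sum_sq_rpow_neg hρ).lintegral_lt_top hM.lt_top
end
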